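/- arXiv:0807.1135 — 3 statements merged into one kernel-verified Lean document; each statement's English description precedes it below -/
import Mathlib

section
/- Let F/K be a Galois extension of number fields with Galois group isomorphic to the dihedral group D_q of order 2q with q odd, let L be the subfield fixed by the cyclic subgroup of order q, and let k be the subfield fixed by a subgroup of order 2. Then the group of roots of unity of k equals that of K, and the group of roots of unity of F equals that of L. -/
/-!
An automorphism of `F` acts on a root of unity `ζ` as `ζ ↦ ζ ^ m` for some `m`, so any two
automorphisms commute on `ζ` and the commutator subgroup of `Gal(F/K)` fixes `ζ`. For `q` odd
every rotation of `D_q` is a commutator, so `ζ ∈ L`. If moreover `ζ ∈ k`, then `ζ` is fixed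
by the rotations and by `σ`, which together generate `D_q`, so `ζ ∈ K`.
-/

open IntermediateField
open scoped commutatorElement

theorem smul_smul_comm_of_isOfFinOrder {G R : Type*} [Monoid G] [CommRing R] [IsDomain R]
    [MulSemiringAction G R] (g h : G) {x : R} (hx : IsOfFinOrder x) :
    g • h • x = h • g • x := by
  obtain ⟨n, hn, hxn⟩ := isOfFinOrder_iff_pow_eq_one.mp hx
  have : NeZero n := ⟨hn.ne'⟩
  have hpow (σ : G) : ∃ m : ℕ, σ • x = x ^ m := by
    simpa using map_rootsOfUnity_eq_pow_self (MulSemiringAction.toRingHom G R σ)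
      (rootsOfUnity.mkOfPowEq x hxn)
  obtain ⟨a, ha⟩ := hpow g
  obtain ⟨b, hb⟩ := hpow h
  rw [hb, smul_pow', ha, smul_pow', hb, ← pow_mul, ← pow_mul, mul_comm]

theorem commutator_le_stabilizer_of_isOfFinOrder {G R : Type*} [Group G] [CommRing R]
    [IsDomain R] [MulSemiringAction G R] {x : R} (hx : IsOfFinOrder x) :
    commutator G ≤ MulAction.stabilizer G x := by
  rw [commutator_def, Subgroup.commutator_le]
  intro g _ h _
  have hy : IsOfFinOrder (g⁻¹ • h⁻¹ • x) :=
    (MulDistribMulAction.toMonoidHom R g⁻¹).isOfFinOrder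
      ((MulDistribMulAction.toMonoidHom R h⁻¹).isOfFinOrder hx)
  rw [MulAction.mem_stabilizer_iff, commutatorElement_def, mul_smul, mul_smul, mul_smul,
    smul_smul_comm_of_isOfFinOrder g h hy, smul_inv_smul, smul_inv_smul]

theorem Subgroup.map_commutator_le_commutator {G G' : Type*} [Group G] [Group G']
    (f : G →* G') : (_root_.commutator G).map f ≤ _root_.commutator G' :=
  (Subgroup.map_commutator _ _ f).trans_le (Subgroup.commutator_mono le_top le_top)

theorem IntermediateField.mem_fixedField_iff_le_stabilizer {K F : Type*} [Field K] [Field F]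
    [Algebra K F] {H : Subgroup (F ≃ₐ[K] F)} {x : F} :
    x ∈ fixedField H ↔ H ≤ MulAction.stabilizer (F ≃ₐ[K] F) x :=
  mem_fixedField_iff H x

namespace DihedralGroup

theorem r_mem_commutator {n : ℕ} (hn : Odd n) (i : ZMod n) :
    r i ∈ commutator (DihedralGroup n) := by
  obtain ⟨m, rfl⟩ := hn
  -- `⁅sr 0, sr j⁆ = r (2 * j)`, and `2 * (m + 1) = 1` in `ZMod (2 * m + 1)`.
  have hcomm :
      ⁅sr (0 : ZMod (2 * m + 1)), sr (((m + 1 : ℕ) : ZMod (2 * m + 1)) * i)⁆ = r i := by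
    rw [commutatorElement_def, inv_sr, inv_sr, sr_mul_sr, mul_assoc, sr_mul_sr, r_mul_r]
    congr 1
    have hn : ((2 * m + 1 : ℕ) : ZMod (2 * m + 1)) = 0 := ZMod.natCast_self _
    push_cast at hn ⊢
    linear_combination i * hn
  rw [← hcomm]
  exact Subgroup.commutator_mem_commutator (Subgroup.mem_top _) (Subgroup.mem_top _)

theorem zpowers_r_one_sup_zpowers_sr_zero (n : ℕ) :
    Subgroup.zpowers (r 1) ⊔ Subgroup.zpowers (sr 0) = (⊤ : Subgroup (DihedralGroup n)) := by
  refine eq_top_iff.mpr fun g _ => ?_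
  have hr (i : ZMod n) : r i ∈ Subgroup.zpowers (r 1) ⊔ Subgroup.zpowers (sr 0) := by
    refine Subgroup.mem_sup_left ⟨ZMod.cast i, ?_⟩
    simp only [r_one_zpow, ZMod.intCast_zmod_cast]
  rcases g with i | i
  · exact hr i
  · rw [← zero_add i, ← sr_mul_r]
    exact mul_mem (Subgroup.mem_sup_right (Subgroup.mem_zpowers _)) (hr i)

end DihedralGroup

theorem rootsOfUnity_dihedral_general (q : ℕ) (hq : Odd q)
    (K F : Type*) [Field K] [NumberField K] [Field F] [NumberField F]
    [Algebra K F] [IsGalois K F]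
    (e : (F ≃ₐ[K] F) ≃* DihedralGroup q)
    (Lf kf : IntermediateField K F)
    (hL : Lf = IntermediateField.fixedField
      ((Subgroup.zpowers (DihedralGroup.r (1 : ZMod q))).comap e.toMonoidHom))
    (hk : kf = IntermediateField.fixedField
      ((Subgroup.zpowers (DihedralGroup.sr (0 : ZMod q))).comap e.toMonoidHom)) :
    {x : F | ∃ n : ℕ, 0 < n ∧ x ^ n = 1}
      = {x : F | x ∈ Lf ∧ ∃ n : ℕ, 0 < n ∧ x ^ n = 1} ∧
    {x : F | x ∈ kf ∧ ∃ n : ℕ, 0 < n ∧ x ^ n = 1}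
      = {x : F | x ∈ (⊥ : IntermediateField K F) ∧ ∃ n : ℕ, 0 < n ∧ x ^ n = 1} := by
  have : FiniteDimensional K F := Module.Finite.of_restrictScalars_finite ℚ K F
  have hrot (x : F) (hx : IsOfFinOrder x) :
      (Subgroup.zpowers (DihedralGroup.r (1 : ZMod q))).comap e.toMonoidHom ≤
        MulAction.stabilizer (F ≃ₐ[K] F) x := by
    rw [Subgroup.comap_equiv_eq_map_symm']
    refine le_trans ?_ (commutator_le_stabilizer_of_isOfFinOrder hx)
    exact (Subgroup.map_mono <| Subgroup.zpowers_le.mpr <|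
      DihedralGroup.r_mem_commutator hq 1).trans (Subgroup.map_commutator_le_commutator _)
  simp_rw [← isOfFinOrder_iff_pow_eq_one]
  refine ⟨Set.ext fun x => ⟨fun hx => ⟨?_, hx⟩, And.right⟩,
    Set.ext fun x => and_congr_left fun hx => ⟨fun hxk => ?_, (bot_le (a := kf) ·)⟩⟩
  · rw [hL, mem_fixedField_iff_le_stabilizer]
    exact hrot x hx
  · rw [hk, mem_fixedField_iff_le_stabilizer] at hxk
    rw [← IsGalois.fixedField_top, mem_fixedField_iff_le_stabilizer,
      ← Subgroup.comap_top e.toMonoidHom, ← DihedralGroup.zpowers_r_one_sup_zpowers_sr_zero,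
      ← Subgroup.comap_sup_eq e.toMonoidHom _ _ e.surjective]
    exact sup_le (hrot x hx) hxk

/-- Let `F/K` be a Galois extension of number fields with group isomorphic to the
dihedral group `D_q`, `q` odd, let `L` be the subfield fixed by the rotation
subgroup `C_q` and `k` the subfield fixed by the order-2 subgroup `⟨σ⟩`.  Then
the roots of unity of `k` are exactly those of `K`, and the roots of unity of `F`
are exactly those of `L`. -/
theorem rootsOfUnity_dihedral (q : ℕ) [NeZero q] (hq : Odd q) (hq1 : 1 < q)
    (K F : Type*) [Field K] [NumberField K] [Field F] [NumberField F]
    [Algebra K F] [IsGalois K F]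
    (e : (F ≃ₐ[K] F) ≃* DihedralGroup q)
    (Lf kf : IntermediateField K F)
    (hL : Lf = IntermediateField.fixedField
      ((Subgroup.zpowers (DihedralGroup.r (1 : ZMod q))).comap e.toMonoidHom))
    (hk : kf = IntermediateField.fixedField
      ((Subgroup.zpowers (DihedralGroup.sr (0 : ZMod q))).comap e.toMonoidHom)) :
    {x : F | ∃ n : ℕ, 0 < n ∧ x ^ n = 1}
      = {x : F | x ∈ Lf ∧ ∃ n : ℕ, 0 < n ∧ x ^ n = 1} ∧
    {x : F | x ∈ kf ∧ ∃ n : ℕ, 0 < n ∧ x ^ n = 1}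
      = {x : F | x ∈ (⊥ : IntermediateField K F) ∧ ∃ n : ℕ, 0 < n ∧ x ^ n = 1} :=
  rootsOfUnity_dihedral_general q hq K F e Lf kf hL hk
end

section
/- Let F/K be a dihedral extension of number fields of degree 2q with q odd, with K totally real and F totally imaginary, and let k be the fixed field of an order-2 subgroup of Gal(F/K). Then k has exactly n real places and n(q-1)/2 pairs of complex places, where n = [K:ℚ]. -/
/-!
Every infinite place `v` of `F` is complex above a real place of `K`, so its stabiliser in
`G = Gal(F/K) ≅ D_q` has order 2. Since `[F : k] = 2` and `F` is totally complex, the real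
places of `k` correspond to the places of `F` ramified over `k`, i.e. to the places fixed by the
reflection `s` generating `Gal(F/k)`. For odd `q` all reflections of `D_q` are conjugate to `s`
and the centraliser of `s` is `{1, s}`, so each `G`-orbit of places of `F`, that is, each place of
`K`, contains exactly one place fixed by `s`. The complex places of `k` are then counted by
`r₁ + 2 r₂ = [k : ℚ] = n q`.
-/

open NumberField IntermediateField Module

namespace DihedralGroup

variable {n : ℕ}

theorem eq_one_or_eq_sr_zero_of_commute (hn : Odd n) {g : DihedralGroup n}
    (h : Commute g (sr 0)) : g = 1 ∨ g = sr 0 := by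
  cases g with
  | r i =>
    have h' : -i = i := by simpa [r_mul_sr, sr_mul_r] using h.eq
    rw [neg_eq_iff_add_eq_zero, ZMod.add_self_eq_zero_iff_eq_zero hn] at h'
    exact .inl (h' ▸ r_zero)
  | sr j =>
    have h' : -j = j := by simpa [sr_mul_sr] using h.eq
    rw [neg_eq_iff_add_eq_zero, ZMod.add_self_eq_zero_iff_eq_zero hn] at h'
    exact .inr (h' ▸ rfl)

theorem isConj_sr_zero_of_orderOf_eq_two [NeZero n] (hn : Odd n) {x : DihedralGroup n}
    (hx : orderOf x = 2) : IsConj x (sr 0) := by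
  cases x with
  | r i =>
    rw [orderOf_r] at hx
    exact absurd (hx ▸ Nat.div_dvd_of_dvd (Nat.gcd_dvd_left n i.val)) hn.not_two_dvd_nat
  | sr j =>
    -- conjugation by `r i` sends `sr j` to `sr (j - 2 * i)`, so take `i = j / 2`
    let u := ZMod.unitOfCoprime 2 (Nat.coprime_two_left.mpr hn)
    have hu : (u : ZMod n) = 2 := by simp [u]
    refine isConj_iff.mpr ⟨r (u⁻¹ * j : ZMod n), ?_⟩
    rw [r_mul_sr, inv_r, sr_mul_r, ← sub_eq_add_neg, sub_sub, ← two_mul, ← hu,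
      u.mul_inv_cancel_left j, sub_self]

end DihedralGroup

theorem Subgroup.mem_zpowers_iff_of_orderOf_eq_two {G : Type*} [Group G] {s x : G}
    (hs : orderOf s = 2) : x ∈ zpowers s ↔ x = 1 ∨ x = s := by
  classical
  rw [(orderOf_pos_iff.mp (hs ▸ two_pos)).mem_zpowers_iff_mem_range_orderOf, hs]
  simp [Finset.range_add_one, eq_comm, or_comm]

namespace NumberField

theorem IsTotallyReal.nat_card_infinitePlace (K : Type*) [Field K] [NumberField K]
    [IsTotallyReal K] : Nat.card (InfinitePlace K) = finrank ℚ K := by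
  rw [IsTotallyReal.finrank, Nat.card_eq_fintype_card,
    InfinitePlace.card_eq_nrRealPlaces_add_nrComplexPlaces, IsTotallyReal.nrComplexPlaces_eq_zero,
    add_zero]

namespace InfinitePlace

theorem two_mul_nat_card_isComplex (K : Type*) [Field K] [NumberField K] :
    2 * Nat.card {w : InfinitePlace K // w.IsComplex} =
      finrank ℚ K - Nat.card {w : InfinitePlace K // w.IsReal} := by
  have := card_add_two_mul_card_eq_rank K
  simp only [nrRealPlaces, nrComplexPlaces, ← Nat.card_eq_fintype_card] at this
  omega

variable {K F : Type*} [Field K] [Field F] [Algebra K F]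

section Quadratic

variable [NumberField K] [NumberField F]

theorem ncard_ramifiedPlacesOver_eq_one (hF : ∀ v : InfinitePlace F, v.IsComplex)
    (hdeg : finrank K F = 2) {w : InfinitePlace K} (hw : w.IsReal) :
    (ramifiedPlacesOver F w).ncard = 1 := by
  have hunram : unramifiedPlacesOver F w = ∅ :=
    Set.eq_empty_of_forall_notMem fun v ⟨_, hv⟩ =>
      not_isReal_iff_isComplex.mpr (hF v) (IsUnramified.liesOver_isReal_over v w hv hw)
  have := unramifedPlacesOver_ncard_add_eq_finrank F w
  rw [hunram, Set.ncard_empty, hdeg] at this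
  omega

theorem card_isReal_eq_card_not_isUnramified (hF : ∀ v : InfinitePlace F, v.IsComplex)
    (hdeg : finrank K F = 2) :
    Nat.card {w : InfinitePlace K // w.IsReal} =
      Nat.card {v : InfinitePlace F // ¬ v.IsUnramified K} := by
  refine (Nat.card_congr (Equiv.ofBijective
    (fun v => ⟨v.1.comap (algebraMap K F), (not_isUnramified_iff.mp v.2).2⟩) ⟨?_, ?_⟩)).symm
  · rintro ⟨v, hv⟩ ⟨v', hv'⟩ h
    obtain ⟨u, hu⟩ := Set.ncard_eq_one.mp
      (ncard_ramifiedPlacesOver_eq_one hF hdeg (not_isUnramified_iff.mp hv).2)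
    have eq_u (x : InfinitePlace F) (hx : ¬ x.IsUnramified K)
        (hxv : x.comap (algebraMap K F) = v.comap (algebraMap K F)) : x = u := by
      have : x ∈ ramifiedPlacesOver F (v.comap (algebraMap K F)) :=
        ⟨⟨congrArg Subtype.val hxv⟩, hx⟩
      rwa [hu] at this
    exact Subtype.ext ((eq_u v hv rfl).trans (eq_u v' hv' (congrArg Subtype.val h).symm).symm)
  · rintro ⟨w, hw⟩
    obtain ⟨v, rfl⟩ := comap_surjective (K := F) w
    exact ⟨⟨v, not_isUnramified_iff.mpr ⟨hF v, hw⟩⟩, rfl⟩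

end Quadratic

section Galois

variable [IsGalois K F]

theorem isUnramified_iff_forall_mem_fixingSubgroup {k : IntermediateField K F}
    {v : InfinitePlace F} :
    v.IsUnramified k ↔ ∀ σ ∈ k.fixingSubgroup, σ • v = v → σ = 1 := by
  rw [isUnramified_iff_stabilizer_eq_bot, Subgroup.eq_bot_iff_forall]
  have hsmul (σ : k.fixingSubgroup) : fixingSubgroupEquiv k σ • v = (σ : Gal(F/K)) • v := rfl
  constructor
  · intro h σ hσ hσv
    exact congrArg Subtype.val ((fixingSubgroupEquiv k).map_eq_one_iff.mp
      (h _ ((hsmul ⟨σ, hσ⟩).trans hσv)))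
  · intro h τ hτ
    obtain ⟨σ, rfl⟩ := (fixingSubgroupEquiv k).surjective τ
    rw [(fixingSubgroupEquiv k).map_eq_one_iff]
    exact Subtype.ext (h σ σ.2 ((hsmul σ).symm.trans hτ))

theorem not_isUnramified_iff_smul_eq_self {s : Gal(F/K)} (hs : orderOf s = 2)
    {k : IntermediateField K F} (hk : k.fixingSubgroup = Subgroup.zpowers s)
    {v : InfinitePlace F} : ¬ v.IsUnramified k ↔ s • v = v := by
  have hs1 : s ≠ 1 := fun h => by simp [h] at hs
  simp only [isUnramified_iff_forall_mem_fixingSubgroup, hk,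
    Subgroup.mem_zpowers_iff_of_orderOf_eq_two hs]
  constructor
  · intro h
    by_contra hsv
    exact h fun σ hσ hσv => hσ.resolve_right (by rintro rfl; exact hsv hσv)
  · exact fun hsv h => hs1 (h s (.inr rfl) hsv)

variable {v : InfinitePlace F}

theorem eq_of_smul_eq_self_of_ne_one (hv : ¬ v.IsUnramified K) {σ τ : Gal(F/K)}
    (hσ : σ • v = v) (hτ : τ • v = v) (hσ1 : σ ≠ 1) (hτ1 : τ ≠ 1) : σ = τ := by
  obtain ⟨_, -, huniq⟩ := (Nat.card_eq_two_iff' 1).mp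
    (not_isUnramified_iff_card_stabilizer_eq_two.mp hv)
  have : (⟨σ, hσ⟩ : MulAction.stabilizer Gal(F/K) v) = ⟨τ, hτ⟩ :=
    (huniq _ (by simpa [Subtype.ext_iff] using hσ1)).trans
      (huniq _ (by simpa [Subtype.ext_iff] using hτ1)).symm
  exact congrArg Subtype.val this

theorem exists_orderOf_eq_two_smul_eq_self (hv : ¬ v.IsUnramified K) :
    ∃ σ : Gal(F/K), orderOf σ = 2 ∧ σ • v = v := by
  have hcard := not_isUnramified_iff_card_stabilizer_eq_two.mp hv
  have : Finite (MulAction.stabilizer Gal(F/K) v) := Nat.finite_of_card_ne_zero (by omega)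
  have : Fact (Nat.Prime 2) := ⟨Nat.prime_two⟩
  obtain ⟨σ, hσ⟩ := exists_prime_orderOf_dvd_card'
    (G := MulAction.stabilizer Gal(F/K) v) 2 (hcard ▸ dvd_rfl)
  exact ⟨σ, by rwa [Subgroup.orderOf_coe], σ.2⟩

theorem card_fixedPlaces_eq_card_infinitePlace (hram : ∀ v : InfinitePlace F, ¬ v.IsUnramified K)
    {s : Gal(F/K)} (hs : s ≠ 1) (hcent : ∀ g, Commute g s → g = 1 ∨ g = s)
    (hconj : ∀ x : Gal(F/K), orderOf x = 2 → IsConj x s) :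
    Nat.card {v : InfinitePlace F // s • v = v} = Nat.card (InfinitePlace K) := by
  refine Nat.card_congr (Equiv.ofBijective (fun v => v.1.comap (algebraMap K F)) ⟨?_, ?_⟩)
  · rintro ⟨v, hv⟩ ⟨v', hv'⟩ h
    obtain ⟨σ, rfl⟩ := exists_smul_eq_of_comap_eq h
    have hσs : σ⁻¹ * s * σ = s :=
      eq_of_smul_eq_self_of_ne_one (hram v)
        (by rw [mul_smul, mul_smul, hv', inv_smul_smul]) hv
        (fun h => hs (conj_eq_one_iff.mp (by rwa [inv_inv] : σ⁻¹ * s * σ⁻¹⁻¹ = 1))) hs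
    have hcomm : Commute σ s := calc
      σ * s = σ * (σ⁻¹ * s * σ) := by rw [hσs]
      _ = s * σ := by group
    rcases hcent σ hcomm with rfl | rfl
    · exact Subtype.ext (one_smul _ _).symm
    · exact Subtype.ext hv.symm
  · intro u
    obtain ⟨v, rfl⟩ := comap_surjective (K := F) u
    obtain ⟨x, hx, hxv⟩ := exists_orderOf_eq_two_smul_eq_self (hram v)
    obtain ⟨c, rfl⟩ := isConj_iff.mp (hconj x hx)
    refine ⟨⟨c • v, by rw [mul_smul, mul_smul, inv_smul_smul, hxv]⟩, ?_⟩
    exact (mem_orbit_iff.mp ⟨c, rfl⟩).symm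

end Galois

end InfinitePlace

end NumberField

theorem signature_of_dihedral_reflection_field_general
    (q : ℕ) [NeZero q] (hq : Odd q)
    (K F : Type*) [Field K] [NumberField K] [Field F] [NumberField F]
    [Algebra K F] [IsGalois K F]
    (e : (F ≃ₐ[K] F) ≃* DihedralGroup q)
    (hKreal : ∀ v : InfinitePlace K, v.IsReal)
    (hFcomplex : ∀ w : InfinitePlace F, w.IsComplex)
    (kf : IntermediateField K F)
    (hk : kf = IntermediateField.fixedField
      ((Subgroup.zpowers (DihedralGroup.sr (0 : ZMod q))).comap e.toMonoidHom)) :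
    Nat.card {w : InfinitePlace kf // w.IsReal} = Module.finrank ℚ K ∧
    2 * Nat.card {w : InfinitePlace kf // w.IsComplex}
      = Module.finrank ℚ K * (q - 1) := by
  have : IsTotallyReal K := ⟨hKreal⟩
  set s : Gal(F/K) := e.symm (DihedralGroup.sr 0)
  have hs : orderOf s = 2 := by rw [MulEquiv.orderOf_eq, DihedralGroup.orderOf_sr]
  have hcent (g : Gal(F/K)) (hg : Commute g s) : g = 1 ∨ g = s :=
    (DihedralGroup.eq_one_or_eq_sr_zero_of_commute hq (by simpa [s] using hg.map e)).imp
      e.map_eq_one_iff.mp e.eq_symm_apply.mpr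
  have hconj (x : Gal(F/K)) (hx : orderOf x = 2) : IsConj x s := by
    simpa using e.symm.toMonoidHom.map_isConj
      (DihedralGroup.isConj_sr_zero_of_orderOf_eq_two hq (x := e x) (by rwa [e.orderOf_eq]))
  have hfix : kf.fixingSubgroup = Subgroup.zpowers s := by
    rw [hk, fixingSubgroup_fixedField, Subgroup.comap_equiv_eq_map_symm', MonoidHom.map_zpowers]
    rfl
  have hdeg : finrank kf F = 2 := by
    rw [← IsGalois.card_fixingSubgroup_eq_finrank kf, hfix, Nat.card_zpowers, hs]
  have hreal : Nat.card {w : InfinitePlace kf // w.IsReal} = finrank ℚ K := by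
    rw [InfinitePlace.card_isReal_eq_card_not_isUnramified hFcomplex hdeg,
      Nat.card_congr (Equiv.subtypeEquivRight fun _ =>
        InfinitePlace.not_isUnramified_iff_smul_eq_self hs hfix),
      InfinitePlace.card_fixedPlaces_eq_card_infinitePlace
        (fun v => InfinitePlace.not_isUnramified_iff.mpr ⟨hFcomplex v, hKreal _⟩)
        (fun h => by simp [h] at hs) hcent hconj, IsTotallyReal.nat_card_infinitePlace]
  have hbase : finrank K kf = q := by
    have := finrank_mul_finrank K kf F
    rw [hdeg, ← IsGalois.card_aut_eq_finrank K F, Nat.card_congr e.toEquiv,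
      DihedralGroup.nat_card] at this
    omega
  refine ⟨hreal, ?_⟩
  rw [InfinitePlace.two_mul_nat_card_isComplex, hreal, ← finrank_mul_finrank ℚ K, hbase,
    Nat.mul_sub_one]

/-- Let `F/K` be a dihedral extension of number fields of degree `2q`, `q` odd,
with `K` totally real of degree `n = [K:ℚ]` and `F` totally imaginary, and let
`k` be the fixed field of an order-2 subgroup of `Gal(F/K)`.  Then `k` has
exactly `n` real places and `n(q-1)/2` (pairs of conjugate) complex places. -/
theorem signature_of_dihedral_reflection_field
    (q : ℕ) [NeZero q] (hq : Odd q) (hq1 : 1 < q)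
    (K F : Type*) [Field K] [NumberField K] [Field F] [NumberField F]
    [Algebra K F] [IsGalois K F]
    (e : (F ≃ₐ[K] F) ≃* DihedralGroup q)
    (hKreal : ∀ v : InfinitePlace K, v.IsReal)
    (hFcomplex : ∀ w : InfinitePlace F, w.IsComplex)
    (kf : IntermediateField K F)
    (hk : kf = IntermediateField.fixedField
      ((Subgroup.zpowers (DihedralGroup.sr (0 : ZMod q))).comap e.toMonoidHom)) :
    Nat.card {w : InfinitePlace kf // w.IsReal} = Module.finrank ℚ K ∧
    2 * Nat.card {w : InfinitePlace kf // w.IsComplex}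
      = Module.finrank ℚ K * (q - 1) :=
  signature_of_dihedral_reflection_field_general q hq K F e hKreal hFcomplex kf hk
end

section
/- Let F/K be a dihedral extension of number fields of degree 2q (q odd) with K totally real of degree n and F totally imaginary, k the fixed field of an order-2 subgroup, and k' = ρ(k) for ρ a generator of the rotation subgroup. Then the unit groups satisfy O_k^× ∩ O_{k'}^× = O_K^×, and the product O_k^× O_{k'}^× has finite index in O_F^×. -/
/-!
Let `s` and `t` be the reflections fixing `k` and `k'`. For a unit `u` of `F`, `u · s u` is a unit
of `k` and `s u · t (s u)` a unit of `k'`, so `u / (t s) u ∈ O_k^× O_{k'}^×`. Since `q` is odd,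
`t s = ρ²` generates the rotations, hence `u ^ q` agrees modulo `O_k^× O_{k'}^×` with the
rotation norm `N = ∏ᵢ ρⁱ u`. As `K` is totally real and `F` totally imaginary, each complex
conjugation is a reflection, so it acts on the rotation-invariant `N` as `s` does: `N / s N` has
absolute value `1` at every embedding and is a root of unity, and a power of `N` lies in
`O_k^×`. Thus `O_F^× / O_k^× O_{k'}^×` is a finitely generated torsion group, hence finite.
The intersection is `O_K^×` because `s` and `t` generate the Galois group.
-/

/-- The group of units of the ring of integers of an intermediate field `E` of
`F/K`, realized as a subgroup of `Fˣ`: the units `u` with `u ∈ E`, `u` integral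
over `ℤ` and `u⁻¹` integral over `ℤ`. -/
def unitSubgroup {K F : Type*} [Field K] [Field F] [Algebra K F]
    (E : IntermediateField K F) : Subgroup Fˣ where
  carrier := {u : Fˣ | (u : F) ∈ E ∧ IsIntegral ℤ (u : F) ∧
    IsIntegral ℤ (((u⁻¹ : Fˣ) : F))}
  one_mem' := ⟨one_mem E, isIntegral_one, by simpa using isIntegral_one⟩
  mul_mem' := fun {a b} ha hb => ⟨mul_mem ha.1 hb.1, ha.2.1.mul hb.2.1, by
    simpa [mul_comm] using ha.2.2.mul hb.2.2⟩
  inv_mem' := fun {a} ha => ⟨by simpa using inv_mem ha.1, ha.2.2, by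
    simpa using ha.2.1⟩

open DihedralGroup NumberField IntermediateField

namespace DihedralGroup

variable {q : ℕ}

theorem isUnit_two_of_odd (hq : Odd q) : IsUnit (2 : ZMod q) := by
  simpa using (ZMod.isUnit_iff_coprime 2 q).mpr (Nat.coprime_two_left.mpr hq)

theorem r_eq_pow_of_isUnit [NeZero q] {a : ZMod q} (ha : IsUnit a) (i : ZMod q) :
    r i = r a ^ (a⁻¹ * i).val := by
  rw [r_pow, ZMod.natCast_zmod_val, ← mul_assoc, ZMod.mul_inv_of_unit a ha, one_mul]

theorem zpowers_sr_sup_zpowers_sr [NeZero q] {a b : ZMod q} (h : IsUnit (a - b)) :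
    Subgroup.zpowers (sr a) ⊔ Subgroup.zpowers (sr b) = ⊤ := by
  have hr : ∀ i, r i ∈ Subgroup.zpowers (sr a) ⊔ Subgroup.zpowers (sr b) := fun i => by
    rw [r_eq_pow_of_isUnit h, ← sr_mul_sr]
    exact Subgroup.pow_mem _ (Subgroup.mul_mem _
      (Subgroup.mem_sup_right (Subgroup.mem_zpowers _))
      (Subgroup.mem_sup_left (Subgroup.mem_zpowers _))) _
  rw [eq_top_iff]
  rintro (i | i) -
  · exact hr i
  · rw [show sr i = sr a * r (i - a) by rw [sr_mul_r, add_sub_cancel]]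
    exact Subgroup.mul_mem _ (Subgroup.mem_sup_left (Subgroup.mem_zpowers _)) (hr _)

theorem exists_eq_sr_of_mul_self_eq_one (hq : Odd q) {d : DihedralGroup q} (h : d * d = 1)
    (hd : d ≠ 1) : ∃ i, d = sr i := by
  rcases d with i | i
  · refine absurd ?_ hd
    rw [r_mul_r, one_def, r.injEq, ← two_mul] at h
    rw [(isUnit_two_of_odd hq).mul_right_eq_zero.mp h, one_def]
  · exact ⟨i, rfl⟩

theorem r_one_mul_sr_zero_mul_inv : (r 1 * sr 0 * (r 1)⁻¹ : DihedralGroup q) = sr (-2) := by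
  rw [inv_r, r_mul_sr, sr_mul_r]
  ring_nf

end DihedralGroup

theorem Subgroup.relIndex_ne_zero_of_forall_exists_pow_mem {G : Type*} [CommGroup G]
    {H J : Subgroup G} [Group.FG H] (h : ∀ x ∈ H, ∃ n ≠ 0, x ^ n ∈ J) : J.relIndex H ≠ 0 := by
  have htorsion : IsMulTorsion (H ⧸ J.subgroupOf H) := by
    intro x
    induction x using QuotientGroup.induction_on with | H x => ?_
    obtain ⟨n, hn, hxn⟩ := h x x.2
    refine isOfFinOrder_iff_pow_eq_one.mpr ⟨n, Nat.pos_of_ne_zero hn, ?_⟩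
    rw [← QuotientGroup.mk_pow, QuotientGroup.eq_one_iff, Subgroup.mem_subgroupOf]
    exact hxn
  have : Group.FG (H ⧸ J.subgroupOf H) := Group.fg_of_surjective (QuotientGroup.mk'_surjective _)
  have : Finite (H ⧸ J.subgroupOf H) := CommGroup.finite_of_fg_isMulTorsion _ htorsion
  exact Subgroup.index_ne_zero_of_finite

theorem div_pow_smul_mem {G M : Type*} [Monoid G] [CommGroup M] [MulDistribMulAction G M]
    {T J : Subgroup M} (hT : ∀ (h : G), ∀ m ∈ T, h • m ∈ T) {g : G}
    (hg : ∀ m ∈ T, m / g • m ∈ J) (n : ℕ) {m : M} (hm : m ∈ T) : m / (g ^ n) • m ∈ J := by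
  induction n with
  | zero => simp
  | succ n ih =>
    have hsplit :
        m / (g ^ (n + 1)) • m = (m / (g ^ n) • m) * ((g ^ n) • m / g • (g ^ n) • m) := by
      rw [pow_succ', mul_smul, div_mul_div_cancel]
    rw [hsplit]
    exact J.mul_mem ih (hg _ (hT _ _ hm))

section UnitSubgroup

variable {K F : Type*} [Field K] [Field F] [Algebra K F]

theorem mem_unitSubgroup {E : IntermediateField K F} {u : Fˣ} :
    u ∈ unitSubgroup E ↔
      (u : F) ∈ E ∧ IsIntegral ℤ (u : F) ∧ IsIntegral ℤ (((u⁻¹ : Fˣ) : F)) :=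
  Iff.rfl

theorem unitSubgroup_inf (E E' : IntermediateField K F) :
    unitSubgroup E ⊓ unitSubgroup E' = unitSubgroup (E ⊓ E') := by
  ext u
  simp only [Subgroup.mem_inf, mem_unitSubgroup, IntermediateField.mem_inf]
  tauto

theorem smul_mem_unitSubgroup_top (g : F ≃ₐ[K] F) {u : Fˣ}
    (hu : u ∈ unitSubgroup (⊤ : IntermediateField K F)) :
    g • u ∈ unitSubgroup (⊤ : IntermediateField K F) := by
  refine ⟨trivial, ?_, ?_⟩
  · simpa [AlgEquiv.smul_def] using hu.2.1.map g.toAlgHom.toRingHom.toIntAlgHom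
  · simpa [← smul_inv', AlgEquiv.smul_def] using hu.2.2.map g.toAlgHom.toRingHom.toIntAlgHom

theorem range_unitsMap_ringOfIntegers :
    (Units.map (algebraMap (𝓞 F) F : 𝓞 F →* F)).range =
      unitSubgroup (⊤ : IntermediateField K F) := by
  ext x
  constructor
  · rintro ⟨v, rfl⟩
    exact ⟨trivial, RingOfIntegers.isIntegral_coe _, by
      rw [← map_inv]; exact RingOfIntegers.isIntegral_coe _⟩
  · rintro ⟨-, hx, hx'⟩
    exact ⟨⟨⟨x, hx⟩, ⟨_, hx'⟩, Subtype.ext x.mul_inv, Subtype.ext x.inv_mul⟩, rfl⟩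

instance [NumberField F] : Group.FG (unitSubgroup (⊤ : IntermediateField K F)) := by
  rw [← range_unitsMap_ringOfIntegers]
  have : Group.FG (𝓞 F)ˣ := Group.fg_iff_monoid_fg.mpr inferInstance
  exact Group.fg_of_surjective (MonoidHom.rangeRestrict_surjective _)

theorem mem_fixedField_zpowers_iff {σ : F ≃ₐ[K] F} {x : F} :
    x ∈ fixedField (Subgroup.zpowers σ) ↔ σ x = x := by
  rw [mem_fixedField_iff]
  refine ⟨fun h => h σ (Subgroup.mem_zpowers σ), fun h f hf => ?_⟩
  have hσ : σ ∈ MulAction.stabilizer (F ≃ₐ[K] F) x := h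
  exact Subgroup.zpowers_le.mpr hσ hf

theorem fixedField_inf_fixedField_eq_bot [FiniteDimensional K F] [IsGalois K F]
    {H₁ H₂ : Subgroup (F ≃ₐ[K] F)} (h : H₁ ⊔ H₂ = ⊤) : fixedField H₁ ⊓ fixedField H₂ = ⊥ := by
  have hstab : ∀ (H : Subgroup (F ≃ₐ[K] F)) (x : F),
      x ∈ fixedField H ↔ H ≤ MulAction.stabilizer (F ≃ₐ[K] F) x :=
    fun H x => mem_fixedField_iff H x
  rw [eq_bot_iff, ← IsGalois.fixedField_top, ← h]
  rintro x ⟨h₁, h₂⟩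
  exact (hstab _ x).mpr (sup_le ((hstab _ x).mp h₁) ((hstab _ x).mp h₂))

theorem mul_smul_mem_unitSubgroup_fixedField {σ : F ≃ₐ[K] F} (hσ : σ * σ = 1) {u : Fˣ}
    (hu : u ∈ unitSubgroup (⊤ : IntermediateField K F)) :
    u * σ • u ∈ unitSubgroup (fixedField (Subgroup.zpowers σ)) := by
  refine ⟨?_, ((unitSubgroup ⊤).mul_mem hu (smul_mem_unitSubgroup_top σ hu)).2⟩
  have hfix : σ • (u * σ • u) = u * σ • u := by
    rw [smul_mul', ← mul_smul, hσ, one_smul, mul_comm]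
  exact mem_fixedField_zpowers_iff.mpr (congrArg Units.val hfix)

end UnitSubgroup

theorem Subgroup.comap_equiv_zpowers {G H : Type*} [Group G] [Group H] (e : G ≃* H) (h : H) :
    (Subgroup.zpowers h).comap e.toMonoidHom = Subgroup.zpowers (e.symm h) :=
  (Subgroup.comap_equiv_eq_map_symm e _).trans (MonoidHom.map_zpowers _ _)

theorem exists_algEquiv_conj {K F : Type*} [Field K] [Field F] [Algebra K F] [IsGalois K F]
    (hKreal : ∀ v : InfinitePlace K, v.IsReal) (hFcomplex : ∀ w : InfinitePlace F, w.IsComplex)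
    (φ : F →+* ℂ) :
    ∃ c : F ≃ₐ[K] F, c ≠ 1 ∧ c * c = 1 ∧ ∀ x : F, starRingEnd ℂ (φ x) = φ (c x) := by
  have hφK : (ComplexEmbedding.conjugate φ).comp (algebraMap K F) = φ.comp (algebraMap K F) :=
    InfinitePlace.isReal_mk_iff.mp (hKreal (InfinitePlace.mk (φ.comp (algebraMap K F))))
  obtain ⟨c, hc⟩ := ComplexEmbedding.exists_comp_symm_eq_of_comp_eq _ φ hφK
  have hconj : ∀ x : F, starRingEnd ℂ (φ x) = φ (c x) := fun x => by
    simpa using RingHom.congr_fun hc (c x)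
  refine ⟨c, fun hc1 => ?_, AlgEquiv.ext fun x => φ.injective ?_, hconj⟩
  · refine InfinitePlace.not_isReal_iff_isComplex.mpr (hFcomplex (InfinitePlace.mk φ))
      (InfinitePlace.isReal_mk_iff.mpr (RingHom.ext fun x => ?_))
    simpa [hc1] using hconj x
  · rw [AlgEquiv.mul_apply, AlgEquiv.one_apply, ← hconj, ← hconj, Complex.conj_conj]

theorem exists_pow_eq_one_of_conj_eq_inv {F : Type*} [Field F] [NumberField F] {w : Fˣ}
    (hw : IsIntegral ℤ (w : F)) (h : ∀ φ : F →+* ℂ, starRingEnd ℂ (φ w) = φ ↑w⁻¹) :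
    ∃ n ≠ 0, w ^ n = 1 := by
  have hnorm : ∀ φ : F →+* ℂ, ‖φ w‖ = 1 := fun φ => by
    have hsq : ‖φ w‖ ^ 2 = 1 := by
      rw [← Complex.normSq_eq_norm_sq, ← Complex.ofReal_inj, ← Complex.mul_conj, h, ← map_mul,
        Units.mul_inv, map_one, Complex.ofReal_one]
    exact (pow_eq_one_iff_of_nonneg (norm_nonneg _) two_ne_zero).mp hsq
  obtain ⟨n, hn, hwn⟩ := Embeddings.pow_eq_one_of_norm_eq_one F ℂ hw hnorm
  exact ⟨n, hn.ne', Units.ext (by simpa using hwn)⟩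

section Dihedral

variable {K F : Type*} [Field K] [Field F] [Algebra K F] {q : ℕ}
  (e : (F ≃ₐ[K] F) ≃* DihedralGroup q)

theorem zpowers_symm_sr_sup_zpowers_symm_sr [NeZero q] {a b : ZMod q} (hab : IsUnit (a - b)) :
    Subgroup.zpowers (e.symm (sr a)) ⊔ Subgroup.zpowers (e.symm (sr b)) = ⊤ := by
  rw [← Subgroup.comap_equiv_zpowers, ← Subgroup.comap_equiv_zpowers,
    Subgroup.comap_sup_eq (f := e.toMonoidHom) _ _ e.surjective, zpowers_sr_sup_zpowers_sr hab,
    Subgroup.comap_top]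

theorem symm_sr_mul_self (a : ZMod q) : e.symm (sr a) * e.symm (sr a) = 1 := by
  rw [← map_mul, sr_mul_self, map_one]

variable {a b : ZMod q} {u : Fˣ}

local notation "𝒰" => unitSubgroup (⊤ : IntermediateField K F)

theorem div_smul_symm_r_mem_sup [NeZero q] (hab : IsUnit (a - b)) (hu : u ∈ 𝒰) (i : ZMod q) :
    u / e.symm (r i) • u ∈ unitSubgroup (fixedField (Subgroup.zpowers (e.symm (sr a)))) ⊔
      unitSubgroup (fixedField (Subgroup.zpowers (e.symm (sr b)))) := by
  set s := e.symm (sr a)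
  set t := e.symm (sr b)
  have hts : t * s = e.symm (r (a - b)) := by rw [← map_mul, sr_mul_sr]
  have hstep : ∀ v ∈ 𝒰, v / (t * s) • v ∈ unitSubgroup (fixedField (Subgroup.zpowers s)) ⊔
      unitSubgroup (fixedField (Subgroup.zpowers t)) := fun v hv => by
    have hsplit : v / (t * s) • v = (v * s • v) / (s • v * t • s • v) := by
      rw [mul_smul, mul_comm v, mul_div_mul_left_eq_div]
    rw [hsplit]
    exact Subgroup.div_mem _
      (Subgroup.mem_sup_left (mul_smul_mem_unitSubgroup_fixedField (symm_sr_mul_self e a) hv))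
      (Subgroup.mem_sup_right (mul_smul_mem_unitSubgroup_fixedField (symm_sr_mul_self e b)
        (smul_mem_unitSubgroup_top s hv)))
  rw [r_eq_pow_of_isUnit hab, map_pow, ← hts]
  exact div_pow_smul_mem (fun g _ hm => smul_mem_unitSubgroup_top g hm) hstep _ hu

def rotationNorm [NeZero q] (u : Fˣ) : Fˣ :=
  ∏ i : ZMod q, e.symm (r i) • u

theorem rotationNorm_mem [NeZero q] (hu : u ∈ 𝒰) : rotationNorm e u ∈ 𝒰 :=
  Subgroup.prod_mem _ fun _ _ => smul_mem_unitSubgroup_top _ hu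

theorem smul_rotationNorm [NeZero q] (j : ZMod q) (u : Fˣ) :
    e.symm (r j) • rotationNorm e u = rotationNorm e u := by
  rw [rotationNorm, Finset.smul_prod']
  exact Fintype.prod_equiv (Equiv.addLeft j) _ _ fun i => by
    rw [← mul_smul, ← map_mul, r_mul_r, Equiv.coe_addLeft]

theorem pow_div_rotationNorm_mem_sup [NeZero q] (hab : IsUnit (a - b)) (hu : u ∈ 𝒰) :
    u ^ q / rotationNorm e u ∈ unitSubgroup (fixedField (Subgroup.zpowers (e.symm (sr a)))) ⊔
      unitSubgroup (fixedField (Subgroup.zpowers (e.symm (sr b)))) := by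
  have hpow : u ^ q = ∏ _i : ZMod q, u := by
    rw [Finset.prod_const, Finset.card_univ, ZMod.card]
  rw [hpow, rotationNorm, ← Finset.prod_div_distrib]
  exact Subgroup.prod_mem _ fun i _ => div_smul_symm_r_mem_sup e hab hu i

theorem exists_pow_mem_of_forall_smul_symm_r_eq [NumberField F] [IsGalois K F] (hq : Odd q)
    (hKreal : ∀ v : InfinitePlace K, v.IsReal) (hFcomplex : ∀ w : InfinitePlace F, w.IsComplex)
    (a : ZMod q) {N : Fˣ} (hN : N ∈ 𝒰) (hrot : ∀ j, e.symm (r j) • N = N) :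
    ∃ n ≠ 0, N ^ n ∈ unitSubgroup (fixedField (Subgroup.zpowers (e.symm (sr a)))) := by
  set s := e.symm (sr a)
  set w := N / s • N with hw
  have hconj : ∀ φ : F →+* ℂ, starRingEnd ℂ (φ w) = φ ↑w⁻¹ := fun φ => by
    obtain ⟨c, hc1, hcc, hc⟩ := exists_algEquiv_conj hKreal hFcomplex φ
    obtain ⟨i, hi⟩ := exists_eq_sr_of_mul_self_eq_one hq (d := e c)
      (by rw [← map_mul, hcc, map_one]) (by rwa [ne_eq, MulEquivClass.map_eq_one_iff])
    have hci : c = e.symm (sr i) := by rw [← hi, MulEquiv.symm_apply_apply]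
    have hcN : c • N = s • N := by
      rw [hci, ← add_sub_cancel a i, ← sr_mul_r, map_mul, mul_smul, hrot]
    have hcw : c • w = w⁻¹ := by
      rw [hw, smul_div', hcN, ← mul_smul, hci, ← map_mul, sr_mul_sr, hrot, inv_div]
    rw [hc, ← hcw]
    rfl
  obtain ⟨n, hn, hwn⟩ := exists_pow_eq_one_of_conj_eq_inv
    ((𝒰).div_mem hN (smul_mem_unitSubgroup_top s hN)).2.1 hconj
  refine ⟨2 * n, by positivity, ?_⟩
  have hsq : N ^ 2 = (N * s • N) * w := by
    rw [hw, sq, mul_mul_div_cancel]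
  rw [pow_mul, hsq, mul_pow, hwn, mul_one]
  exact Subgroup.pow_mem _ (mul_smul_mem_unitSubgroup_fixedField (symm_sr_mul_self e a) hN) n

theorem exists_pow_mem_sup [NeZero q] [NumberField F] [IsGalois K F] (hq : Odd q)
    (hKreal : ∀ v : InfinitePlace K, v.IsReal) (hFcomplex : ∀ w : InfinitePlace F, w.IsComplex)
    (hab : IsUnit (a - b)) (hu : u ∈ 𝒰) :
    ∃ n ≠ 0, u ^ n ∈ unitSubgroup (fixedField (Subgroup.zpowers (e.symm (sr a)))) ⊔
      unitSubgroup (fixedField (Subgroup.zpowers (e.symm (sr b)))) := by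
  obtain ⟨n, hn, hNn⟩ := exists_pow_mem_of_forall_smul_symm_r_eq e hq hKreal hFcomplex a
    (rotationNorm_mem e hu) (fun j => smul_rotationNorm e j u)
  refine ⟨q * n, mul_ne_zero (NeZero.ne q) hn, ?_⟩
  rw [pow_mul, ← div_mul_cancel (u ^ q) (rotationNorm e u), mul_pow]
  exact Subgroup.mul_mem _ (Subgroup.pow_mem _ (pow_div_rotationNorm_mem_sup e hab hu) n)
    (Subgroup.mem_sup_left hNn)

end Dihedral

theorem units_of_conjugate_reflection_fields_general
    (q : ℕ) [NeZero q] (hq : Odd q)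
    (K F : Type*) [Field K] [NumberField K] [Field F] [NumberField F]
    [Algebra K F] [IsGalois K F]
    (e : (F ≃ₐ[K] F) ≃* DihedralGroup q)
    (hKreal : ∀ v : NumberField.InfinitePlace K, v.IsReal)
    (hFcomplex : ∀ w : NumberField.InfinitePlace F, w.IsComplex)
    (kf kf' : IntermediateField K F)
    (hk : kf = IntermediateField.fixedField
      ((Subgroup.zpowers (DihedralGroup.sr (0 : ZMod q))).comap e.toMonoidHom))
    (hk' : kf' = IntermediateField.fixedField
      ((Subgroup.zpowers (DihedralGroup.r (1 : ZMod q) *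
          DihedralGroup.sr (0 : ZMod q) *
          (DihedralGroup.r (1 : ZMod q))⁻¹)).comap e.toMonoidHom)) :
    unitSubgroup kf ⊓ unitSubgroup kf' = unitSubgroup (⊥ : IntermediateField K F) ∧
    (unitSubgroup kf ⊔ unitSubgroup kf').relIndex
        (unitSubgroup (⊤ : IntermediateField K F)) ≠ 0 := by
  rw [Subgroup.comap_equiv_zpowers] at hk
  rw [r_one_mul_sr_zero_mul_inv, Subgroup.comap_equiv_zpowers] at hk'
  subst hk hk'
  have h2 : IsUnit ((0 : ZMod q) - -2) := by simpa using isUnit_two_of_odd hq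
  refine ⟨?_, Subgroup.relIndex_ne_zero_of_forall_exists_pow_mem
    fun u hu => exists_pow_mem_sup e hq hKreal hFcomplex h2 hu⟩
  rw [unitSubgroup_inf,
    fixedField_inf_fixedField_eq_bot (zpowers_symm_sr_sup_zpowers_symm_sr e h2)]

/-- Let `F/K` be a dihedral extension of number fields of degree `2q` (`q` odd)
with `K` totally real and `F` totally imaginary, `k` the fixed field of an
order-2 subgroup and `k' = ρ(k)`.  Then `O_k^× ∩ O_{k'}^× = O_K^×`, and the
product `O_k^× O_{k'}^×` has finite index in `O_F^×`. -/
theorem units_of_conjugate_reflection_fields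
    (q : ℕ) [NeZero q] (hq : Odd q) (hq1 : 1 < q)
    (K F : Type*) [Field K] [NumberField K] [Field F] [NumberField F]
    [Algebra K F] [IsGalois K F]
    (e : (F ≃ₐ[K] F) ≃* DihedralGroup q)
    (hKreal : ∀ v : NumberField.InfinitePlace K, v.IsReal)
    (hFcomplex : ∀ w : NumberField.InfinitePlace F, w.IsComplex)
    (kf kf' : IntermediateField K F)
    (hk : kf = IntermediateField.fixedField
      ((Subgroup.zpowers (DihedralGroup.sr (0 : ZMod q))).comap e.toMonoidHom))
    (hk' : kf' = IntermediateField.fixedField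
      ((Subgroup.zpowers (DihedralGroup.r (1 : ZMod q) *
          DihedralGroup.sr (0 : ZMod q) *
          (DihedralGroup.r (1 : ZMod q))⁻¹)).comap e.toMonoidHom)) :
    unitSubgroup kf ⊓ unitSubgroup kf' = unitSubgroup (⊥ : IntermediateField K F) ∧
    (unitSubgroup kf ⊔ unitSubgroup kf').relIndex
        (unitSubgroup (⊤ : IntermediateField K F)) ≠ 0 :=
  units_of_conjugate_reflection_fields_general q hq K F e hKreal hFcomplex kf kf' hk hk'
end
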